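/- arXiv:2605.30840 — 2 statements merged into one kernel-verified Lean document; each statement's English description precedes it below -/
import Mathlib

section
/- Let n ≥ 3 be an integer and let J be the n×n integer matrix with J·e_i = e_{i+1} for 1 ≤ i < n and J·e_n = 0. Let P̂ = 1 + J and Q̂ = 1 + J + J², viewed as elements of GL_n(ℤ) (both are unipotent, hence invertible over ℤ). Then P̂ and Q̂ commute, and the map ℤ × ℤ → GL_n(ℤ) sending (a, b) to P̂^a · Q̂^b is an injective group homomorphism. In particular, the subgroup of GL_n(ℤ) generated by P̂ and Q̂ is free abelian of rank 2, and the cyclic subgroups generated by P̂ and by Q̂ intersect trivially. -/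
/-!
`P̂ = 1 + J` and `Q̂ = 1 + J + J²` are polynomials in `J`, hence commute. Since `J³ ≠ 0`, the
first column of `p(J)` holds the coefficients of `1, X, X²` in `p`, and on polynomials with
constant term `1` these determine the additive invariant `logJet`. It sends `P̂^s Q̂^t`
(`s t : ℕ`) to `s • (1, -1) + t • (1, 1) = (s + t, t - s)`, which determines `(s, t)`. As
`ℤ × ℤ` is the group of differences of `ℕ × ℕ`, injectivity on `ℕ × ℕ` suffices.
-/

open Matrix

/-- The `n × n` nilpotent Jordan block over a ring `R`: `J e_i = e_{i+1}` for `i < n`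
and `J e_n = 0`, i.e. the matrix with ones on the subdiagonal and zeros elsewhere. -/
def jordanJ (n : ℕ) (R : Type) [Ring R] : Matrix (Fin n) (Fin n) R :=
  Matrix.of fun i j => if (i : ℕ) = (j : ℕ) + 1 then 1 else 0

open Polynomial

namespace Commute

variable {G : Type*} [Group G] {P Q : G}

def zpowersProdHom (h : Commute P Q) : Multiplicative (ℤ × ℤ) →* G :=
  ((zpowersHom G P).noncommCoprod (zpowersHom G Q) fun a b => by
      simp only [zpowersHom_apply]; exact h.zpow_zpow _ _).comp
    (MulEquiv.prodMultiplicative ℤ ℤ).toMonoidHom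

@[simp]
lemma zpowersProdHom_ofAdd (h : Commute P Q) (a b : ℤ) :
    h.zpowersProdHom (.ofAdd (a, b)) = P ^ a * Q ^ b := rfl

lemma range_zpowersProdHom (h : Commute P Q) :
    h.zpowersProdHom.range = Subgroup.closure {P, Q} := by
  rw [zpowersProdHom, MonoidHom.range_comp,
    MonoidHom.range_eq_top_of_surjective _ (MulEquiv.surjective _), ← MonoidHom.range_eq_map,
    MonoidHom.noncommCoprod_range, Subgroup.range_zpowersHom, Subgroup.range_zpowersHom,
    Set.insert_eq, Subgroup.closure_union, Subgroup.zpowers_eq_closure,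
    Subgroup.zpowers_eq_closure]

lemma zpowers_inf_zpowers_eq_bot (h : Commute P Q)
    (hinj : Function.Injective h.zpowersProdHom) :
    Subgroup.zpowers P ⊓ Subgroup.zpowers Q = ⊥ := by
  rw [eq_bot_iff]
  rintro x ⟨⟨a, rfl⟩, ⟨b, hb⟩⟩
  have hab : h.zpowersProdHom (.ofAdd (a, -b)) = h.zpowersProdHom 1 := by
    simp only [zpowersProdHom_ofAdd, _root_.zpow_neg, map_one]
    exact mul_inv_eq_one.mpr hb.symm
  have ha : a = 0 := congrArg (fun x => x.toAdd.1) (hinj hab)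
  simp [ha]

end Commute

lemma MonoidHom.injective_of_injective_on_nat {G : Type*} [Group G]
    (g : Multiplicative (ℤ × ℤ) →* G)
    (h : ∀ s t u v : ℕ, g (.ofAdd (s, t)) = g (.ofAdd (u, v)) → s = u ∧ t = v) :
    Function.Injective g := by
  rw [injective_iff_map_eq_one]
  intro x hx
  obtain ⟨⟨a, b⟩, rfl⟩ := Multiplicative.ofAdd.surjective x
  have hpos_neg : g (.ofAdd (a.toNat, b.toNat)) = g (.ofAdd ((-a).toNat, (-b).toNat)) := by
    rw [← one_mul (g (.ofAdd (((-a).toNat : ℤ), ((-b).toNat : ℤ)))), ← hx, ← map_mul]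
    congr 1
    ext <;> simp <;> omega
  obtain ⟨ha, hb⟩ := h _ _ _ _ hpos_neg
  ext <;> simp <;> omega

section JordanBlock

variable {R : Type} {n : ℕ}

lemma jordanJ_pow_apply [Ring R] (k : ℕ) (i j : Fin n) :
    (jordanJ n R ^ k) i j = if (i : ℕ) = j + k then 1 else 0 := by
  induction k generalizing j with
  | zero => simp [Matrix.one_apply, Fin.ext_iff]
  | succ k ih =>
    have hJ (l : Fin n) : jordanJ n R l j = if (l : ℕ) = j + 1 then 1 else 0 := rfl
    simp only [pow_succ, Matrix.mul_apply, hJ, mul_ite, mul_one, mul_zero]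
    by_cases hj : (j : ℕ) + 1 < n
    · rw [Finset.sum_eq_single_of_mem ⟨j + 1, hj⟩ (Finset.mem_univ _), if_pos rfl, ih]
      · simp only [add_assoc, add_comm 1 k]
      · intro l _ hl
        rw [if_neg (fun h => hl (Fin.ext h))]
    · rw [Finset.sum_eq_zero fun l _ => if_neg (by omega), if_neg (by omega)]

lemma aeval_jordanJ_apply_zero [CommRing R] (p : R[X]) (i : Fin n) (h0 : 0 < n) :
    aeval (jordanJ n R) p i ⟨0, h0⟩ = p.coeff i := by
  induction p using Polynomial.induction_on' with
  | add p q hp hq => simp [hp, hq]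
  | monomial k a =>
    simp [aeval_monomial, Algebra.algebraMap_eq_smul_one, jordanJ_pow_apply, coeff_monomial,
      eq_comm]

lemma coeff_eq_of_aeval_jordanJ_eq [CommRing R] {p q : R[X]}
    (h : aeval (jordanJ n R) p = aeval (jordanJ n R) q) {i : ℕ} (hi : i < n) :
    p.coeff i = q.coeff i := by
  rw [← aeval_jordanJ_apply_zero p ⟨i, hi⟩ (by omega), ← aeval_jordanJ_apply_zero q ⟨i, hi⟩, h]

end JordanBlock

/-- For `p = 1 + xX + yX² + ⋯` this is `(x, 2y - x²)`: the coefficients of `X` in `log p` and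
of `X²` in `2 log p`. -/
def logJet (p : ℤ[X]) : ℤ × ℤ := (p.coeff 1, 2 * p.coeff 2 - p.coeff 1 ^ 2)

lemma logJet_mul {p q : ℤ[X]} (hp : p.coeff 0 = 1) (hq : q.coeff 0 = 1) :
    logJet (p * q) = logJet p + logJet q := by
  ext <;> simp [logJet, coeff_mul, Finset.Nat.antidiagonal_succ, hp, hq] <;> ring

lemma logJet_pow {p : ℤ[X]} (hp : p.coeff 0 = 1) (k : ℕ) : logJet (p ^ k) = k • logJet p := by
  induction k with
  | zero => simp [logJet, coeff_one]
  | succ k ih =>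
    have hpk : (p ^ k).coeff 0 = 1 := by
      rw [coeff_zero_eq_eval_zero, eval_pow, ← coeff_zero_eq_eval_zero, hp, one_pow]
    rw [pow_succ, logJet_mul hpk hp, ih, succ_nsmul]

lemma logJet_one_add_X_pow_mul (s t : ℕ) :
    logJet ((1 + X) ^ s * (1 + X + X ^ 2) ^ t) = ((s + t : ℤ), (t - s : ℤ)) := by
  have hP : logJet (1 + X) = (1, -1) := by simp [logJet, coeff_one, coeff_X]
  have hQ : logJet (1 + X + X ^ 2) = (1, 1) := by simp [logJet, coeff_one, coeff_X]
  rw [logJet_mul, logJet_pow, logJet_pow, hP, hQ]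
  · ext <;> simp; ring
  all_goals simp [coeff_zero_eq_eval_zero]

lemma one_add_jordanJ_pow_mul_pow_inj {n : ℕ} (hn : 3 ≤ n) {s t u v : ℕ}
    (h : (1 + jordanJ n ℤ) ^ s * (1 + jordanJ n ℤ + jordanJ n ℤ ^ 2) ^ t =
      (1 + jordanJ n ℤ) ^ u * (1 + jordanJ n ℤ + jordanJ n ℤ ^ 2) ^ v) :
    s = u ∧ t = v := by
  have hjet : logJet ((1 + X : ℤ[X]) ^ s * (1 + X + X ^ 2) ^ t) =
      logJet ((1 + X) ^ u * (1 + X + X ^ 2) ^ v) := by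
    have haeval : aeval (jordanJ n ℤ) ((1 + X : ℤ[X]) ^ s * (1 + X + X ^ 2) ^ t) =
        aeval (jordanJ n ℤ) ((1 + X : ℤ[X]) ^ u * (1 + X + X ^ 2) ^ v) := by
      simpa using h
    simp only [logJet, coeff_eq_of_aeval_jordanJ_eq haeval (by omega : 1 < n),
      coeff_eq_of_aeval_jordanJ_eq haeval (by omega : 2 < n)]
  rw [logJet_one_add_X_pow_mul, logJet_one_add_X_pow_mul, Prod.ext_iff] at hjet
  omega

/-- For `n ≥ 3`, the elements `P̂ = 1 + J` and `Q̂ = 1 + J + J²` of `GL n ℤ` commute,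
the map `(a, b) ↦ P̂^a * Q̂^b` is an injective group homomorphism `ℤ × ℤ → GL n ℤ`
whose range is the subgroup generated by `P̂` and `Q̂` (so that subgroup is free
abelian of rank 2), and the cyclic subgroups generated by `P̂` and `Q̂` intersect
trivially. -/
theorem integer_unipotent_free_abelian (n : ℕ) (hn : 3 ≤ n) (Phat Qhat : GL (Fin n) ℤ)
    (hP : (Phat : Matrix (Fin n) (Fin n) ℤ) = 1 + jordanJ n ℤ)
    (hQ : (Qhat : Matrix (Fin n) (Fin n) ℤ) = 1 + jordanJ n ℤ + jordanJ n ℤ ^ 2) :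
    Commute Phat Qhat ∧
    (∃ f : Multiplicative (ℤ × ℤ) →* GL (Fin n) ℤ,
      Function.Injective f ∧
      (∀ a b : ℤ, f (Multiplicative.ofAdd (a, b)) = Phat ^ a * Qhat ^ b) ∧
      f.range = Subgroup.closure {Phat, Qhat}) ∧
    Subgroup.zpowers Phat ⊓ Subgroup.zpowers Qhat = ⊥ := by
  have hcomm : Commute Phat Qhat := by
    have h := (Commute.all (1 + X : ℤ[X]) (1 + X + X ^ 2)).map (aeval (jordanJ n ℤ))
    simp only [map_add, map_one, map_pow, aeval_X] at h
    exact Units.ext (by rw [Units.val_mul, Units.val_mul, hP, hQ]; exact h.eq)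
  have hinj : Function.Injective hcomm.zpowersProdHom :=
    hcomm.zpowersProdHom.injective_of_injective_on_nat fun s t u v h =>
      one_add_jordanJ_pow_mul_pow_inj hn <| by simpa [hP, hQ] using congrArg Units.val h
  exact ⟨hcomm, ⟨_, hinj, hcomm.zpowersProdHom_ofAdd, hcomm.range_zpowersProdHom⟩,
    hcomm.zpowers_inf_zpowers_eq_bot hinj⟩
end

section
/- Let n ≥ 3 be an integer and p an odd prime with p > n. Let J be the n×n matrix over ZMod p with J·e_i = e_{i+1} for 1 ≤ i < n and J·e_n = 0, and let P = 1 + J and Q = 1 + J + J² in GL_n(ZMod p). In the semidirect product G = V ⋊ GL_n(ZMod p), where V is the additive group (ZMod p)^n (written multiplicatively) with the natural matrix action, let A be the subgroup generated by {inl(e_1), inr(P)} and B the subgroup generated by {inl(e_1), inr(Q)}. Then A and B are each generated by 2 elements, while any set generating the subgroup A ⊓ B has cardinality at least n. In particular, the minimal number of generators of A ⊓ B is n. -/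
/-!
Both `A` and `B` contain `V`: for a subgroup `H`, the vectors `v` with `inl v ∈ H` form a
subspace, which for `H = A` (resp. `B`) contains `e₁` and is invariant under `P - 1 = J`
(resp. `Q - 1 = J + J²`), and the Krylov vectors `(J + cJ²)ᵐ e₁` are unitriangular, hence
span. Conversely, the `GL`-components of `A` and `B` lie in `⟨P⟩` and `⟨Q⟩`, which meet
trivially: as `p ≥ n`, `P` and `Q` have order `p`, and the column `(1, a, C(a,2))` of `P^a`
versus `(1, b, C(b,2) + b)` of `Q^b` forces `a = b = 0`. So `A ⊓ B = V ≅ (ZMod p)ⁿ`: a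
generating set of it spans `V` over `ZMod p`, so has at least `n` elements, and the standard
basis has `n`.
-/

open Matrix

/-- The natural action of `GL n R` on the (multiplicatively written) additive group
`Rⁿ` by matrix-vector multiplication, as a homomorphism to the automorphism group. -/
def glPhi (n : ℕ) (R : Type) [CommRing R] :
    GL (Fin n) R →* MulAut (Multiplicative (Fin n → R)) where
  toFun g :=
    { toFun := fun v => Multiplicative.ofAdd (g.val.mulVec v.toAdd)
      invFun := fun v => Multiplicative.ofAdd (g.inv.mulVec v.toAdd)
      left_inv := fun v => by
        simp [Matrix.mulVec_mulVec, g.inv_val, Matrix.one_mulVec]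
      right_inv := fun v => by
        simp [Matrix.mulVec_mulVec, g.val_inv, Matrix.one_mulVec]
      map_mul' := fun u v => by
        simp [Matrix.mulVec_add, ofAdd_add] }
  map_one' := by
    ext v
    simp [Matrix.one_mulVec]
  map_mul' g h := by
    ext v
    simp [Matrix.mulVec_mulVec]

/-- `P = 1 + jordanQuad n R 0` and `Q = 1 + jordanQuad n R 1`. -/
def jordanQuad (n : ℕ) (R : Type) [CommRing R] (c : R) : Matrix (Fin n) (Fin n) R :=
  jordanJ n R + c • jordanJ n R ^ 2

section JordanBlock

variable {n : ℕ} {R : Type} [CommRing R]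

theorem jordanJ_mulVec_apply (v : Fin n → R) (i : Fin n) :
    (jordanJ n R *ᵥ v) i = if h : (i : ℕ) = 0 then 0 else v ⟨i - 1, by omega⟩ := by
  rw [mulVec, dotProduct]
  split_ifs with h
  · exact Finset.sum_eq_zero fun j _ => by simp [jordanJ, h]
  · rw [Finset.sum_eq_single ⟨i - 1, by omega⟩ (fun j _ hj => by
      simp only [jordanJ, of_apply, ite_mul, one_mul, zero_mul, ite_eq_right_iff]
      exact fun hij => absurd (Fin.ext (by dsimp only; omega)) hj) (by simp)]
    simp only [jordanJ, of_apply, ite_mul, one_mul, zero_mul, ite_eq_left_iff]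
    omega

theorem jordanQuad_mulVec (c : R) (v : Fin n → R) :
    jordanQuad n R c *ᵥ v =
      jordanJ n R *ᵥ v + c • (jordanJ n R *ᵥ (jordanJ n R *ᵥ v)) := by
  rw [jordanQuad, add_mulVec, smul_mulVec, pow_two, mulVec_mulVec]

theorem jordanJ_pow_mulVec_apply_of_lt (k : ℕ) (v : Fin n → R) (i : Fin n)
    (hi : (i : ℕ) < k) :
    (jordanJ n R ^ k *ᵥ v) i = 0 := by
  induction k generalizing i with
  | zero => omega
  | succ k ih =>
    rw [pow_succ', ← mulVec_mulVec, jordanJ_mulVec_apply]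
    split_ifs
    · rfl
    · exact ih _ (by dsimp only; omega)

theorem jordanJ_pow_eq_zero : jordanJ n R ^ n = 0 := by
  ext i j
  simpa using jordanJ_pow_mulVec_apply_of_lt (R := R) n (Pi.single j 1) i i.isLt

theorem jordanQuad_pow_eq_zero (c : R) : jordanQuad n R c ^ n = 0 := by
  have hfac : jordanQuad n R c = jordanJ n R * (1 + c • jordanJ n R) := by
    rw [jordanQuad, mul_add, mul_one, mul_smul_comm, pow_two]
  rw [hfac, ((Commute.one_right _).add_right ((Commute.refl _).smul_right c)).mul_pow,
    jordanJ_pow_eq_zero, zero_mul]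

theorem jordanQuad_pow_mulVec_single_apply (c : R) (hn : 0 < n) (m : ℕ) (i : Fin n)
    (hi : (i : ℕ) ≤ m) :
    (jordanQuad n R c ^ m *ᵥ Pi.single ⟨0, hn⟩ 1) i = if (i : ℕ) = m then 1 else 0 := by
  induction m generalizing i with
  | zero => simp [one_apply, Fin.ext_iff]
  | succ m ih =>
    rw [pow_succ', ← mulVec_mulVec, jordanQuad_mulVec]
    simp only [Pi.add_apply, Pi.smul_apply, smul_eq_mul, jordanJ_mulVec_apply]
    by_cases h0 : (i : ℕ) = 0
    · simp [h0]
    rw [dif_neg h0, dif_neg h0, ih _ (by dsimp only; omega)]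
    by_cases h1 : (i : ℕ) - 1 = 0
    · simp only [h1, dif_pos, mul_zero, add_zero]
      split_ifs <;> first | omega | rfl
    rw [dif_neg h1, ih _ (by dsimp only; omega)]
    simp only [mul_ite, mul_one, mul_zero]
    split_ifs <;> first | omega | simp

theorem one_add_jordanQuad_pow_mulVec_single_apply (hn : 2 < n) (c : R) (a : ℕ) :
    ((1 + jordanQuad n R c) ^ a *ᵥ Pi.single ⟨0, by omega⟩ 1) ⟨0, by omega⟩ = 1 ∧
      ((1 + jordanQuad n R c) ^ a *ᵥ Pi.single ⟨0, by omega⟩ 1) ⟨1, by omega⟩ =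
        (a : R) ∧
      ((1 + jordanQuad n R c) ^ a *ᵥ Pi.single ⟨0, by omega⟩ 1) ⟨2, by omega⟩ =
        a.choose 2 + c * a := by
  induction a with
  | zero => simp
  | succ a ih =>
    obtain ⟨h0, h1, h2⟩ := ih
    rw [pow_succ', ← mulVec_mulVec]
    rw [add_mulVec, one_mulVec, jordanQuad_mulVec]
    simp only [Pi.add_apply, Pi.smul_apply, smul_eq_mul, jordanJ_mulVec_apply]
    refine ⟨by simp only [h0, ↓reduceDIte, mul_zero, add_zero],
      by simp only [h0, h1, one_ne_zero, ↓reduceDIte, tsub_self, mul_zero, add_zero, Nat.cast_succ],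
      ?_⟩
    simp only [h0, h1, h2, OfNat.ofNat_ne_zero, one_ne_zero, ↓reduceDIte, Nat.add_one_sub_one,
      tsub_self, mul_one, Nat.choose_succ_succ a 1, Nat.choose_one_right, Nat.cast_add, Nat.cast_one]
    ring

end JordanBlock

theorem one_add_pow_char_eq_one {R : Type*} [Ring R] {p : ℕ} [Fact p.Prime] [CharP R p] {x : R}
    (hx : x ^ p = 0) : (1 + x) ^ p = 1 := by
  rw [add_pow_char_of_commute (p := p) (h := Commute.one_left x), one_pow, hx, add_zero]

theorem pow_char_eq_one_of_val_eq_one_add_jordanQuad {n p : ℕ} [Fact p.Prime] (hnp : n ≤ p)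
    {c : ZMod p} {g : GL (Fin n) (ZMod p)} (hg : (g : Matrix _ _ _) = 1 + jordanQuad n _ c) :
    g ^ p = 1 := by
  cases isEmpty_or_nonempty (Fin n)
  · exact Subsingleton.elim _ _
  ext1
  rw [Units.val_pow_eq_pow_val, hg, Units.val_one]
  exact one_add_pow_char_eq_one (pow_eq_zero_of_le hnp (jordanQuad_pow_eq_zero c))

theorem exists_pow_eq_of_mem_zpowers {G : Type*} [Group G] {g x : G} {p : ℕ} (hp : 0 < p)
    (hg : g ^ p = 1) (hx : x ∈ Subgroup.zpowers g) : ∃ a < p, g ^ a = x := by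
  classical
  have hfin : IsOfFinOrder g := isOfFinOrder_iff_pow_eq_one.mpr ⟨p, hp, hg⟩
  obtain ⟨a, ha, rfl⟩ := Finset.mem_image.mp (hfin.mem_zpowers_iff_mem_range_orderOf.mp hx)
  exact ⟨a, (Finset.mem_range.mp ha).trans_le (orderOf_le_of_pow_eq_one hp hg), rfl⟩

theorem zpowers_inf_zpowers_eq_bot {n p : ℕ} [Fact p.Prime] (hn : 2 < n) (hnp : n ≤ p)
    {c d : ZMod p} (hcd : c ≠ d) {g h : GL (Fin n) (ZMod p)}
    (hg : (g : Matrix _ _ _) = 1 + jordanQuad n _ c)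
    (hh : (h : Matrix _ _ _) = 1 + jordanQuad n _ d) :
    Subgroup.zpowers g ⊓ Subgroup.zpowers h = ⊥ := by
  have hp : 0 < p := (Fact.out : p.Prime).pos
  refine eq_bot_iff.mpr fun x ⟨hxg, hxh⟩ => ?_
  obtain ⟨a, hap, rfl⟩ := exists_pow_eq_of_mem_zpowers hp
    (pow_char_eq_one_of_val_eq_one_add_jordanQuad hnp hg) hxg
  obtain ⟨b, hbp, hba⟩ := exists_pow_eq_of_mem_zpowers hp
    (pow_char_eq_one_of_val_eq_one_add_jordanQuad hnp hh) hxh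
  have hmat : (1 + jordanQuad n (ZMod p) c) ^ a = (1 + jordanQuad n (ZMod p) d) ^ b := by
    rw [← hg, ← hh, ← Units.val_pow_eq_pow_val, ← Units.val_pow_eq_pow_val, hba]
  obtain ⟨-, hg1, hg2⟩ := one_add_jordanQuad_pow_mulVec_single_apply hn c a
  obtain ⟨-, hh1, hh2⟩ := one_add_jordanQuad_pow_mulVec_single_apply hn d b
  rw [hmat] at hg1 hg2
  have hab : a = b := by
    simpa [Nat.mod_eq_of_lt, hap, hbp] using congrArg ZMod.val (hg1.symm.trans hh1)
  subst hab
  have ha0 : (a : ZMod p) = 0 := by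
    have : (c - d) * a = 0 := by linear_combination hg2.symm.trans hh2
    exact (mul_eq_zero.mp this).resolve_left (sub_ne_zero.mpr hcd)
  rw [ZMod.natCast_eq_zero_iff] at ha0
  rw [Nat.eq_zero_of_dvd_of_lt ha0 hap, pow_zero]
  exact Subgroup.one_mem _

theorem span_range_eq_top_of_unitriangular {K ι : Type*} [Field K] [Fintype ι] [LinearOrder ι]
    (w : ι → ι → K) (hlt : ∀ m i, i < m → w m i = 0) (hdiag : ∀ m, w m m = 1) :
    Submodule.span K (Set.range w) = ⊤ := by
  have hdet : (Matrix.of w).det = 1 := by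
    rw [det_of_isUpperTriangular (M := Matrix.of w) fun m i h => hlt m i h]
    simp [hdiag]
  refine (linearIndependent_rows_of_det_ne_zero (A := Matrix.of w) ?_)
    |>.span_eq_top_of_card_eq_finrank' ?_
  · simp [hdet]
  · simp

theorem eq_top_of_single_zero_mem_of_jordanQuad_mulVec_mem {n : ℕ} {K : Type} [Field K]
    (hn : 0 < n) (c : K) {W : Submodule K (Fin n → K)} (he : Pi.single ⟨0, hn⟩ 1 ∈ W)
    (hW : ∀ v ∈ W, jordanQuad n K c *ᵥ v ∈ W) : W = ⊤ := by
  have hkrylov (m : ℕ) : jordanQuad n K c ^ m *ᵥ Pi.single ⟨0, hn⟩ 1 ∈ W := by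
    induction m with
    | zero => rwa [pow_zero, one_mulVec]
    | succ m ih => rw [pow_succ', ← mulVec_mulVec]; exact hW _ ih
  refine eq_top_iff.mpr ((span_range_eq_top_of_unitriangular
    (fun m : Fin n => jordanQuad n K c ^ (m : ℕ) *ᵥ Pi.single ⟨0, hn⟩ 1)
    (fun m i h => ?_) (fun m => ?_)).ge.trans (Submodule.span_le.mpr ?_))
  · rw [jordanQuad_pow_mulVec_single_apply c hn _ _ h.le, if_neg (Fin.val_ne_of_ne h.ne)]
  · rw [jordanQuad_pow_mulVec_single_apply c hn _ _ le_rfl, if_pos rfl]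
  · rintro _ ⟨m, rfl⟩
    exact hkrylov m

namespace SemidirectProduct

variable {N G : Type*} [Group N] [Group G] {φ : G →* MulAut N}

theorem inl_aut_mem {H : Subgroup (N ⋊[φ] G)} {g : G} {x : N} (hg : inr g ∈ H)
    (hx : inl x ∈ H) :
    inl (φ g x) ∈ H := by
  rw [inl_aut, map_inv]
  exact H.mul_mem (H.mul_mem hg hx) (H.inv_mem hg)

theorem closure_inl_inr_le_comap_rightHom (x : N) (g : G) :
    Subgroup.closure {inl x, inr g} ≤
      (Subgroup.zpowers g).comap (rightHom : N ⋊[φ] G →* G) := by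
  rw [Subgroup.closure_le, Set.insert_subset_iff, Set.singleton_subset_iff]
  exact ⟨by simp, by simp⟩

end SemidirectProduct

theorem AddSubgroup.toZModSubmodule_closure {n : ℕ} {M : Type*} [AddCommGroup M]
    [Module (ZMod n) M] (s : Set M) :
    toZModSubmodule n (closure s) = Submodule.span (ZMod n) s :=
  le_antisymm (show closure s ≤ (Submodule.span (ZMod n) s).toAddSubgroup from
    (closure_le _).mpr Submodule.subset_span) (Submodule.span_le.mpr subset_closure)

theorem Subgroup.closure_eq_top_iff_span_eq_top {n : ℕ} {V : Type*} [AddCommGroup V]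
    [Module (ZMod n) V] (S : Set (Multiplicative V)) :
    closure S = ⊤ ↔ Submodule.span (ZMod n) (Multiplicative.ofAdd ⁻¹' S) = ⊤ := by
  rw [← AddSubgroup.toZModSubmodule_closure, ← toAddSubgroup'_closure,
    ← (AddSubgroup.toZModSubmodule n).map_top, (AddSubgroup.toZModSubmodule n).apply_eq_iff_eq,
    ← toAddSubgroup'.map_top, toAddSubgroup'.apply_eq_iff_eq]

theorem Subgroup.closure_range_basis_eq_range {n : ℕ} {V G ι : Type*} [AddCommGroup V]
    [Module (ZMod n) V] [Group G] (f : Multiplicative V →* G) (b : Module.Basis ι (ZMod n) V) :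
    closure (Set.range fun i => f (Multiplicative.ofAdd (b i))) = f.range := by
  rw [Set.range_comp' f, ← MonoidHom.map_closure, MonoidHom.range_eq_map,
    (closure_eq_top_iff_span_eq_top (n := n) _).mpr (by convert b.span_eq; ext; simp)]

theorem finrank_le_ncard_of_closure_eq_range {p : ℕ} [Fact p.Prime] {V G : Type*}
    [AddCommGroup V] [Module (ZMod p) V] [Finite V] [Group G] {f : Multiplicative V →* G}
    (hf : Function.Injective f) {S : Set G} (hS : Subgroup.closure S = f.range) :
    Module.finrank (ZMod p) V ≤ S.ncard := by
  have hSf : S ⊆ Set.range f := by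
    rw [← MonoidHom.coe_range, ← hS]
    exact Subgroup.subset_closure
  have hT : Subgroup.closure (f ⁻¹' S) = ⊤ := by
    apply Subgroup.map_injective hf
    rw [MonoidHom.map_closure, Set.image_preimage_eq_of_subset hSf, hS, ← MonoidHom.range_eq_map]
  rw [Subgroup.closure_eq_top_iff_span_eq_top (n := p)] at hT
  set T := Multiplicative.ofAdd ⁻¹' (f ⁻¹' S)
  have : Fintype T := T.toFinite.fintype
  calc Module.finrank (ZMod p) V = Module.finrank (ZMod p) (Submodule.span (ZMod p) T) := by
        rw [hT, finrank_top]
    _ ≤ T.toFinset.card := finrank_span_le_card T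
    _ = T.ncard := (Set.ncard_eq_toFinset_card' T).symm
    _ = S.ncard := Set.ncard_preimage_of_injective_subset_range
        (hf.comp Multiplicative.ofAdd.injective)
        (by rwa [Multiplicative.ofAdd.surjective.range_comp])

section

variable {n p : ℕ} [Fact p.Prime]

theorem range_inl_le_closure_inl_single_inr (hn : 0 < n) {c : ZMod p} {g : GL (Fin n) (ZMod p)}
    (hg : (g : Matrix _ _ _) = 1 + jordanQuad n _ c) :
    (SemidirectProduct.inl :
        _ →* Multiplicative (Fin n → ZMod p) ⋊[glPhi n (ZMod p)] _).range ≤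
      Subgroup.closure {SemidirectProduct.inl (Multiplicative.ofAdd (Pi.single ⟨0, hn⟩ 1)),
        SemidirectProduct.inr g} := by
  set H := Subgroup.closure {SemidirectProduct.inl (Multiplicative.ofAdd (Pi.single ⟨0, hn⟩ 1)),
    SemidirectProduct.inr (φ := glPhi n (ZMod p)) g}
  set W := AddSubgroup.toZModSubmodule p (H.comap SemidirectProduct.inl).toAddSubgroup'
  have hW : W = ⊤ := by
    refine eq_top_of_single_zero_mem_of_jordanQuad_mulVec_mem hn c
      (Subgroup.subset_closure (Set.mem_insert _ _)) fun v hv => ?_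
    have hgv : (g : Matrix (Fin n) (Fin n) (ZMod p)) *ᵥ v ∈ W :=
      SemidirectProduct.inl_aut_mem (Subgroup.subset_closure (by simp)) hv
    rw [show jordanQuad n _ c *ᵥ v = (g : Matrix _ _ _) *ᵥ v - v by
      rw [hg, add_mulVec, one_mulVec, add_sub_cancel_left]]
    exact W.sub_mem hgv hv
  rintro _ ⟨x, rfl⟩
  exact (hW ▸ Submodule.mem_top : Multiplicative.toAdd x ∈ W)

theorem closure_inf_closure_eq_range_inl (hn : 2 < n) (hnp : n ≤ p) {c d : ZMod p} (hcd : c ≠ d)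
    {g h : GL (Fin n) (ZMod p)} (hg : (g : Matrix _ _ _) = 1 + jordanQuad n _ c)
    (hh : (h : Matrix _ _ _) = 1 + jordanQuad n _ d) :
    Subgroup.closure {SemidirectProduct.inl (Multiplicative.ofAdd (Pi.single ⟨0, by omega⟩ 1)),
        SemidirectProduct.inr (φ := glPhi n (ZMod p)) g} ⊓
      Subgroup.closure
        {SemidirectProduct.inl (Multiplicative.ofAdd (Pi.single ⟨0, by omega⟩ 1)),
          SemidirectProduct.inr h} = SemidirectProduct.inl.range := by
  refine le_antisymm ?_ (le_inf (range_inl_le_closure_inl_single_inr _ hg)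
    (range_inl_le_closure_inl_single_inr _ hh))
  refine (inf_le_inf (SemidirectProduct.closure_inl_inr_le_comap_rightHom _ _)
    (SemidirectProduct.closure_inl_inr_le_comap_rightHom _ _)).trans ?_
  rw [← Subgroup.comap_inf, zpowers_inf_zpowers_eq_bot hn hnp hcd hg hh, MonoidHom.comap_bot,
    SemidirectProduct.range_inl_eq_ker_rightHom]

end

/-- In the semidirect product `G = V ⋊ GL n (ZMod p)`, the subgroups
`A = ⟨inl e₁, inr P⟩` and `B = ⟨inl e₁, inr Q⟩` (with `P = 1 + J`, `Q = 1 + J + J²`)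
are each generated by 2 elements, every generating set of `A ⊓ B` has at least `n`
elements, and `A ⊓ B` has a generating set with exactly `n` elements; so the minimal
number of generators of `A ⊓ B` is `n`. -/
theorem two_generated_subgroups_with_rank_n_intersection (n p : ℕ) (hn : 3 ≤ n)
    (hp : p.Prime) (hpn : n < p) (P Q : GL (Fin n) (ZMod p))
    (hP : (P : Matrix (Fin n) (Fin n) (ZMod p)) = 1 + jordanJ n (ZMod p))
    (hQ : (Q : Matrix (Fin n) (Fin n) (ZMod p)) =
      1 + jordanJ n (ZMod p) + jordanJ n (ZMod p) ^ 2) :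
    ∀ A B : Subgroup (Multiplicative (Fin n → ZMod p) ⋊[glPhi n (ZMod p)]
        GL (Fin n) (ZMod p)),
      A = Subgroup.closure
          {SemidirectProduct.inl
              (Multiplicative.ofAdd (Pi.single (⟨0, by omega⟩ : Fin n) 1)),
            SemidirectProduct.inr (φ := glPhi n (ZMod p)) P} →
      B = Subgroup.closure
          {SemidirectProduct.inl
              (Multiplicative.ofAdd (Pi.single (⟨0, by omega⟩ : Fin n) 1)),
            SemidirectProduct.inr (φ := glPhi n (ZMod p)) Q} →
      (∃ S : Finset (Multiplicative (Fin n → ZMod p) ⋊[glPhi n (ZMod p)]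
          GL (Fin n) (ZMod p)), S.card ≤ 2 ∧ Subgroup.closure (S : Set _) = A) ∧
      (∃ S : Finset (Multiplicative (Fin n → ZMod p) ⋊[glPhi n (ZMod p)]
          GL (Fin n) (ZMod p)), S.card ≤ 2 ∧ Subgroup.closure (S : Set _) = B) ∧
      (∀ S : Set (Multiplicative (Fin n → ZMod p) ⋊[glPhi n (ZMod p)]
          GL (Fin n) (ZMod p)), Subgroup.closure S = A ⊓ B → n ≤ S.ncard) ∧
      (∃ S : Finset (Multiplicative (Fin n → ZMod p) ⋊[glPhi n (ZMod p)]
          GL (Fin n) (ZMod p)), S.card = n ∧ Subgroup.closure (S : Set _) = A ⊓ B) := by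
  intro A B hA hB
  have : Fact p.Prime := ⟨hp⟩
  have hAB : A ⊓ B = SemidirectProduct.inl.range := by
    rw [hA, hB]
    exact closure_inf_closure_eq_range_inl hn hpn.le zero_ne_one
      (by rw [hP, jordanQuad, zero_smul, add_zero]) (by rw [hQ, jordanQuad, one_smul, add_assoc])
  refine ⟨⟨{_, _}, Finset.card_le_two, by rw [Finset.coe_pair, hA]⟩,
    ⟨{_, _}, Finset.card_le_two, by rw [Finset.coe_pair, hB]⟩, fun S hS => ?_,
    ⟨Finset.univ.image fun i =>
      SemidirectProduct.inl (Multiplicative.ofAdd (Pi.basisFun (ZMod p) (Fin n) i)), ?_, ?_⟩⟩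
  · simpa using finrank_le_ncard_of_closure_eq_range (p := p) SemidirectProduct.inl_injective
      (hS.trans hAB)
  · rw [Finset.card_image_of_injective, Finset.card_fin]
    exact fun i j h => (Pi.basisFun _ _).injective
      (Multiplicative.ofAdd.injective (SemidirectProduct.inl_injective h))
  · rw [hAB, Finset.coe_image, Finset.coe_univ, Set.image_univ]
    exact Subgroup.closure_range_basis_eq_range _ (Pi.basisFun (ZMod p) (Fin n))
end
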